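/- Let p > 1 and let Θ : (0,∞) → (0,∞) be measurable with 1/Θ ∉ L¹((R₂,∞)) for some R₂ > 0. Suppose Y : [R₂,∞) → ℝ is nondecreasing, differentiable, bounded above, and satisfies (a + b·Y(R))^p ≤ C^p Θ(R) Y'(R) for all R ≥ R₂, where a, b, C > 0 and Y(R₂) ≥ 0. Then a contradiction follows; i.e., no such Y exists. -/

import Mathlib

/-! Since `a + b Y ≥ a > 0`, the inequality gives `Θ⁻¹ ≤ (C^p / a^p) Y'` on `(R₂, ∞)`. A nondecreasing
function that is bounded above has a finite limit at infinity, so its nonnegative derivative is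
integrable on `(R₂, ∞)`; hence so is `Θ⁻¹`, contradicting the hypothesis. -/

open Set Filter Topology MeasureTheory

theorem MonotoneOn.exists_tendsto_atTop {Y : ℝ → ℝ} {r : ℝ} (hmono : MonotoneOn Y (Ici r))
    (hbdd : BddAbove (Y '' Ici r)) : ∃ l, Tendsto Y atTop (𝓝 l) := by
  set g : ℝ → ℝ := fun x => Y (max x r)
  have hg_mono : Monotone g := fun x y hxy =>
    hmono (le_max_right x r) (le_max_right y r) (max_le_max hxy le_rfl)
  have hg_bdd : BddAbove (range g) :=
    hbdd.mono (range_subset_iff.2 fun x => mem_image_of_mem Y (le_max_right x r))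
  refine ⟨_, (tendsto_atTop_ciSup hg_mono hg_bdd).congr' ?_⟩
  filter_upwards [eventually_ge_atTop r] with x hx
  simp only [g, max_eq_left hx]

theorem MonotoneOn.integrableOn_Ioi_deriv {Y : ℝ → ℝ} {r : ℝ} (hmono : MonotoneOn Y (Ici r))
    (hbdd : BddAbove (Y '' Ici r)) (hdiff : ∀ x ∈ Ici r, DifferentiableAt ℝ Y x) :
    IntegrableOn (deriv Y) (Ioi r) := by
  obtain ⟨l, hl⟩ := hmono.exists_tendsto_atTop hbdd
  refine integrableOn_Ioi_deriv_of_nonneg' (fun x hx => (hdiff x hx).hasDerivAt) (fun x hx => ?_) hl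
  rw [← derivWithin_of_isOpen isOpen_Ioi hx]
  exact (hmono.mono Ioi_subset_Ici_self).derivWithin_nonneg

theorem inv_le_div_rpow_mul_of_rpow_le {p a s K θ d : ℝ} (hp : 0 ≤ p) (ha : 0 < a) (has : a ≤ s)
    (hθ : 0 < θ) (h : s ^ p ≤ K * θ * d) : θ⁻¹ ≤ K / a ^ p * d := by
  have hap : a ^ p ≤ θ * (K * d) :=
    (Real.rpow_le_rpow ha.le has hp).trans (h.trans_eq (by ring))
  rw [div_mul_eq_mul_div, le_div_iff₀ (Real.rpow_pos_of_pos ha p), inv_mul_le_iff₀ hθ]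
  exact hap

theorem stmt14_general (p a b C R₂ : ℝ) (hp : 1 < p) (ha : 0 < a) (hb : 0 < b)
    (Θ : ℝ → ℝ) (hΘmeas : Measurable Θ) (hΘpos : ∀ R, 0 < Θ R)
    (hΘ : ¬ MeasureTheory.IntegrableOn (fun R => (Θ R)⁻¹) (Set.Ioi R₂))
    (Y : ℝ → ℝ) (hYmono : MonotoneOn Y (Set.Ici R₂))
    (hYdiff : ∀ R ≥ R₂, DifferentiableAt ℝ Y R)
    (B : ℝ) (hYB : ∀ R ≥ R₂, Y R ≤ B) (hY0 : 0 ≤ Y R₂)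
    (hineq : ∀ R ≥ R₂, (a + b * Y R) ^ p ≤ C ^ p * Θ R * deriv Y R) : False := by
  apply hΘ
  have hbdd : BddAbove (Y '' Ici R₂) := ⟨B, by rintro _ ⟨R, hR, rfl⟩; exact hYB R hR⟩
  refine ((hYmono.integrableOn_Ioi_deriv hbdd hYdiff).const_mul (C ^ p / a ^ p)).mono'
    hΘmeas.inv.aestronglyMeasurable.restrict ?_
  refine (ae_restrict_iff' measurableSet_Ioi).2 (ae_of_all _ fun R (hR : R₂ < R) => ?_)
  have hYR : 0 ≤ Y R := hY0.trans (hYmono self_mem_Ici hR.le hR.le)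
  rw [Real.norm_of_nonneg (inv_nonneg.2 (hΘpos R).le)]
  exact inv_le_div_rpow_mul_of_rpow_le (by linarith) ha
    (le_add_of_nonneg_right (mul_nonneg hb.le hYR)) (hΘpos R) (hineq R hR.le)

/-- Nonlinear differential inequality argument: if `1/Θ` is not integrable on `(R₂,∞)`, there is
no nondecreasing, differentiable, bounded-above `Y` with `Y(R₂) ≥ 0` satisfying
`(a + b Y(R))^p ≤ C^p Θ(R) Y'(R)` for all `R ≥ R₂`, where `a, b, C > 0` and `p > 1`. -/
theorem stmt14 (p a b C R₂ : ℝ) (hp : 1 < p) (ha : 0 < a) (hb : 0 < b) (hC : 0 < C)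
    (hR₂ : 0 < R₂) (Θ : ℝ → ℝ) (hΘmeas : Measurable Θ) (hΘpos : ∀ R, 0 < Θ R)
    (hΘ : ¬ MeasureTheory.IntegrableOn (fun R => (Θ R)⁻¹) (Set.Ioi R₂))
    (Y : ℝ → ℝ) (hYmono : MonotoneOn Y (Set.Ici R₂))
    (hYdiff : ∀ R ≥ R₂, DifferentiableAt ℝ Y R)
    (B : ℝ) (hYB : ∀ R ≥ R₂, Y R ≤ B) (hY0 : 0 ≤ Y R₂)
    (hineq : ∀ R ≥ R₂, (a + b * Y R) ^ p ≤ C ^ p * Θ R * deriv Y R) : False :=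
  stmt14_general p a b C R₂ hp ha hb Θ hΘmeas hΘpos hΘ Y hYmono hYdiff B hYB hY0 hineq
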